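/- If R = ⟨R_0, R_1, …⟩ is a uniformly computable sequence of subsets of ω and C is an R-cohesive set, and f : ω × ω → {0,1} is a computable function such that for each i ∈ {0,1} and each x, the set {s : f(x,s) = i} is infinite iff x ∉ A_i (where A_0, A_1 are disjoint Σ⁰₂ sets, and R_x(s) holds iff f(x,s) = 1), then the set D = {x : f(x,c) = 1 for all but finitely many c ∈ C} is a Δ⁰₂(C) set separating A_0 from A_1, i.e., A_0 ⊆ D and D ∩ A_1 = ∅. -/

import Mathlib

open Classical

/-- Codes for oracle Turing machines: partial recursive functions relative to an oracle. -/
inductive CodeO : Type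
  | zero : CodeO
  | succ : CodeO
  | left : CodeO
  | right : CodeO
  | oracle : CodeO
  | pair : CodeO → CodeO → CodeO
  | comp : CodeO → CodeO → CodeO
  | prec : CodeO → CodeO → CodeO
  | rfind' : CodeO → CodeO

/-- Evaluation of an oracle code with oracle `O`, following `Nat.Partrec.Code.eval`. -/
def evalo (O : ℕ → Bool) : CodeO → ℕ →. ℕ
  | CodeO.zero => pure 0
  | CodeO.succ => fun n => Part.some (n + 1)
  | CodeO.left => fun n => Part.some (Nat.unpair n).1
  | CodeO.right => fun n => Part.some (Nat.unpair n).2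
  | CodeO.oracle => fun n => Part.some (cond (O n) 1 0)
  | CodeO.pair cf cg => fun n => Nat.pair <$> evalo O cf n <*> evalo O cg n
  | CodeO.comp cf cg => fun n => evalo O cg n >>= evalo O cf
  | CodeO.prec cf cg =>
    Nat.unpaired fun a n =>
      n.rec (evalo O cf a) fun y IH => do
        let i ← IH
        evalo O cg (Nat.pair a (Nat.pair y i))
  | CodeO.rfind' cf =>
    Nat.unpaired fun a m =>
      (Nat.rfind fun n => (fun m => m = 0) <$> evalo O cf (Nat.pair a (n + m))).map (· + m)

/-- A Gödel numbering of oracle codes. -/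
def encodeCodeO : CodeO → ℕ
  | CodeO.zero => 0
  | CodeO.succ => 1
  | CodeO.left => 2
  | CodeO.right => 3
  | CodeO.oracle => 4
  | CodeO.pair cf cg => 4 * (2 * (2 * Nat.pair (encodeCodeO cf) (encodeCodeO cg))) + 5
  | CodeO.comp cf cg => 4 * (2 * (2 * Nat.pair (encodeCodeO cf) (encodeCodeO cg) + 1)) + 5
  | CodeO.prec cf cg => 4 * (2 * (2 * Nat.pair (encodeCodeO cf) (encodeCodeO cg)) + 1) + 5
  | CodeO.rfind' cf => 4 * (2 * (2 * encodeCodeO cf + 1) + 1) + 5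

/-- The Turing jump `A' = {e : Φ_e^A(e) ↓}`. -/
noncomputable def jump (A : ℕ → Bool) : ℕ → Bool :=
  fun e => decide (∃ c : CodeO, encodeCodeO c = e ∧ (evalo A c e).Dom)

/-- `A` is Turing reducible to `B`. -/
def TuringRedTo (A B : ℕ → Bool) : Prop :=
  ∃ c : CodeO, ∀ n, evalo B c n = Part.some (cond (A n) 1 0)

/-- Turing equivalence. -/
def TuringEquiv (A B : ℕ → Bool) : Prop := TuringRedTo A B ∧ TuringRedTo B A

/-- The recursive join `A ⊕ B`. -/
def join (A B : ℕ → Bool) : ℕ → Bool :=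
  fun n => if n % 2 = 0 then A (n / 2) else B (n / 2)

/-- The halting problem `0'`. -/
noncomputable def zeroJump : ℕ → Bool := jump (fun _ => false)

/-- `A` is weak truth-table reducible to `B`: a Turing reduction whose oracle use
on input `n` is bounded by `f n` for a total computable `f`. -/
def WttRedTo (A B : ℕ → Bool) : Prop :=
  ∃ f : ℕ → ℕ, Computable f ∧ ∃ c : CodeO,
    ∀ n, ∀ B2 : ℕ → Bool, (∀ y < f n, B2 y = B y) →
      evalo B2 c n = Part.some (cond (A n) 1 0)

/-- The initial segment of length `n` of an infinite binary sequence. -/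
def seg (P : ℕ → Bool) (n : ℕ) : List Bool := (List.range n).map P

/-- `T` (a set of binary strings given by its characteristic function) is a tree:
closed under initial segments. -/
def IsTree (T : List Bool → Bool) : Prop :=
  ∀ σ τ : List Bool, σ <+: τ → T τ = true → T σ = true

/-- `T` is infinite: it contains strings of every length. -/
def TreeInfinite (T : List Bool → Bool) : Prop :=
  ∀ n, ∃ σ : List Bool, σ.length = n ∧ T σ = true

/-- The `n`-th level of the arithmetical hierarchy relative to oracle `A`:
`SigmaIn A 0 B` means `B` is `A`-computable, and `SigmaIn A (n+1) B` means
`B x ↔ ∃ y, R ⟨x,y⟩` for a `Π_n^A` relation `R`. -/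
def SigmaIn (A : ℕ → Bool) : ℕ → Set ℕ → Prop
  | 0, B => ∃ b : ℕ → Bool, TuringRedTo b A ∧ ∀ n, n ∈ B ↔ b n = true
  | n + 1, B => ∃ R : Set ℕ, SigmaIn A n {m | m ∉ R} ∧ ∀ x, x ∈ B ↔ ∃ y, Nat.pair x y ∈ R

/-- `C` is cohesive for the sequence of sets `R`: `C` is infinite and for each `k`,
either `C ∖ R_k` or `C ∩ R_k` is finite. -/
def Cohesive (R : ℕ → ℕ → Bool) (C : Set ℕ) : Prop :=
  C.Infinite ∧ ∀ k, (C \ {x | R k x = true}).Finite ∨ (C ∩ {x | R k x = true}).Finite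

/-- `T`, a function on binary strings, is computable in oracle `X`. -/
def ComputesStrFun (X : ℕ → Bool) (T : List Bool → Bool) : Prop :=
  ∃ c : CodeO, ∀ σ : List Bool, evalo X c (Encodable.encode σ) = Part.some (cond (T σ) 1 0)

/-- `Y` is of PA degree relative to `X`: every infinite `X`-computable binary tree
has a `Y`-computable infinite path. -/
def PAOver (Y X : ℕ → Bool) : Prop :=
  ∀ T : List Bool → Bool, ComputesStrFun X T → IsTree T → TreeInfinite T →
    ∃ P : ℕ → Bool, (∀ n, T (seg P n) = true) ∧ TuringRedTo P Y

/-
Cohesiveness of `C` for the sets `R_x = {s | f x s = true}` makes `f x` eventually constant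
on `C`, and `D` collects the `x` for which the eventual value is `true`. For `x ∈ A₀` the value
`false` occurs only finitely often, so `x ∈ D`; for `x ∈ A₁` the value `true` occurs only finitely
often, and since `C` is infinite, `x ∉ D`. Both `D` and, by cohesiveness, its complement say
"from some `y` on, every element of `C` has a fixed `f`-value", an `∃∀` statement over a
`C`-computable matrix, hence `Σ⁰₂(C)`.
-/

def toCodeO : Nat.Partrec.Code → CodeO
  | .zero => .zero
  | .succ => .succ
  | .left => .left
  | .right => .right
  | .pair a b => .pair (toCodeO a) (toCodeO b)
  | .comp a b => .comp (toCodeO a) (toCodeO b)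
  | .prec a b => .prec (toCodeO a) (toCodeO b)
  | .rfind' a => .rfind' (toCodeO a)

theorem evalo_toCodeO (O : ℕ → Bool) (c : Nat.Partrec.Code) : evalo O (toCodeO c) = c.eval := by
  induction c with
  | zero | succ | left | right => rfl
  | pair a b iha ihb | comp a b iha ihb | prec a b iha ihb =>
    simp only [toCodeO, evalo, Nat.Partrec.Code.eval, iha, ihb]; rfl
  | rfind' a iha => simp only [toCodeO, evalo, Nat.Partrec.Code.eval, iha]; rfl

theorem exists_codeO_of_computable {g : ℕ → ℕ} (hg : Computable g) (O : ℕ → Bool) :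
    ∃ c : CodeO, ∀ n, evalo O c n = Part.some (g n) := by
  obtain ⟨c, hc⟩ := Nat.Partrec.Code.exists_code.1 (Partrec.nat_iff.1 hg)
  exact ⟨toCodeO c, fun n => by rw [evalo_toCodeO, hc]; rfl⟩

theorem turingRedTo_of_computable_query {p : ℕ → Bool → Bool} (hp : Computable₂ p)
    {s : ℕ → ℕ} (hs : Computable s) (O : ℕ → Bool) :
    TuringRedTo (fun n => p n (O (s n))) O := by
  -- The oracle answers `O (s n)` as the number `cond (O (s n)) 1 0`; `g` decodes it.
  set g : ℕ → ℕ := fun m => cond (p m.unpair.1 (decide (m.unpair.2 = 1))) 1 0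
  have hg : Computable g :=
    Computable.cond
      (hp.comp (Computable.fst.comp Computable.unpair)
        ((Primrec.eq.decide.to_comp).comp (Computable.snd.comp Computable.unpair)
          (Computable.const 1)))
      (Computable.const 1) (Computable.const 0)
  obtain ⟨cg, hcg⟩ := exists_codeO_of_computable hg O
  obtain ⟨cs, hcs⟩ := exists_codeO_of_computable hs O
  obtain ⟨cid, hcid⟩ := exists_codeO_of_computable Computable.id O
  refine ⟨.comp cg (.pair cid (.comp .oracle cs)), fun n => ?_⟩
  have hdecode : g (Nat.pair n (cond (O (s n)) 1 0)) = cond (p n (O (s n))) 1 0 := by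
    cases O (s n) <;> simp [g]
  simp [evalo, hcs, hcid, Seq.seq]
  exact (Part.bind_some _ _).trans ((hcg _).trans (congrArg _ hdecode))

theorem sigmaIn_two_of_turingRedTo {O b : ℕ → Bool} (hb : TuringRedTo b O) :
    SigmaIn O 2 {x | ∃ y, ∀ z, b (Nat.pair (Nat.pair x y) z) = true} :=
  ⟨{m | ∀ z, b (Nat.pair m z) = true},
    ⟨{k | b k = false}, ⟨b, hb, fun k => by simp⟩, fun m => by simp⟩, fun x => Iff.rfl⟩

theorem Nat.finite_setOf_iff {p : ℕ → Prop} : {n | p n}.Finite ↔ ∃ y, ∀ s, y ≤ s → ¬ p s := by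
  rw [← Set.not_infinite, ← Nat.frequently_atTop_iff_infinite, Filter.not_frequently,
    Filter.eventually_atTop]

theorem sigmaIn_two_setOf_finite_inter (C : ℕ → Bool) {g : ℕ → ℕ → Bool} (hg : Computable₂ g) :
    SigmaIn C 2 {x | ({n | C n = true} ∩ {s | g x s = false}).Finite} := by
  -- `p ⟨⟨x, y⟩, s⟩ (C s)` fails exactly when `s ≥ y` lies in `C ∩ {s | g x s = false}`.
  set p : ℕ → Bool → Bool := fun k c =>
    decide (k.unpair.2 < k.unpair.1.unpair.2) || !c || g k.unpair.1.unpair.1 k.unpair.2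
  have hp : Computable₂ p := by
    have hk : Computable fun q : ℕ × Bool => q.1.unpair := Computable.unpair.comp Computable.fst
    have hxy : Computable fun q : ℕ × Bool => q.1.unpair.1.unpair :=
      Computable.unpair.comp (Computable.fst.comp hk)
    exact Primrec.or.to_comp.comp
      (Primrec.or.to_comp.comp
        (Primrec.nat_lt.decide.to_comp.comp (Computable.snd.comp hk) (Computable.snd.comp hxy))
        (Primrec.not.to_comp.comp Computable.snd))
      (hg.comp (Computable.fst.comp hxy) (Computable.snd.comp hk))
  convert sigmaIn_two_of_turingRedTo
    (turingRedTo_of_computable_query hp (Computable.snd.comp Computable.unpair) C) using 1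
  ext x
  change {s | C s = true ∧ g x s = false}.Finite ↔ _
  simp only [Nat.finite_setOf_iff, not_and, Bool.not_eq_false, p,
    Bool.or_eq_true, decide_eq_true_eq, Bool.not_eq_true', Nat.unpair_pair]
  refine exists_congr fun y => forall_congr' fun s => ?_
  cases C s <;> cases g x s <;> simp [or_iff_not_imp_left]

theorem Cohesive.finite_inter_true_iff {R : ℕ → ℕ → Bool} {C : Set ℕ} (hC : Cohesive R C)
    (k : ℕ) : (C ∩ {s | R k s = true}).Finite ↔ ¬(C ∩ {s | R k s = false}).Finite := by
  have hsplit : C = (C ∩ {s | R k s = false}) ∪ (C ∩ {s | R k s = true}) := by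
    ext s; cases h : R k s <;> simp [h]
  have hdiff : C \ {s | R k s = true} = C ∩ {s | R k s = false} := by
    ext s; simp
  constructor
  · intro htrue hfalse
    exact hC.1 (hsplit ▸ hfalse.union htrue)
  · intro hfalse
    exact (hC.2 k).resolve_left (hdiff ▸ hfalse)

theorem cohesive_separation_general (A0 A1 : Set ℕ)
    (f : ℕ → ℕ → Bool) (hf : Computable₂ f)
    (h0 : ∀ x, {s | f x s = false}.Infinite ↔ x ∉ A0)
    (h1 : ∀ x, {s | f x s = true}.Infinite ↔ x ∉ A1)
    (C : ℕ → Bool)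
    (hcoh : Cohesive (fun x s => f x s) {n | C n = true}) :
    let D : Set ℕ := {x | ({n | C n = true} ∩ {s | f x s = false}).Finite}
    A0 ⊆ D ∧ D ∩ A1 = ∅ ∧ SigmaIn C 2 D ∧ SigmaIn C 2 Dᶜ := by
  intro D
  have hDc : Dᶜ = {x | ({n | C n = true} ∩ {s | (!f x s) = false}).Finite} := by
    ext x
    simp only [Bool.not_eq_false']
    exact (hcoh.finite_inter_true_iff x).symm
  refine ⟨fun x hx => ?_, Set.eq_empty_of_forall_notMem fun x ⟨hxD, hxA1⟩ => ?_,
    sigmaIn_two_setOf_finite_inter C hf,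
    hDc ▸ sigmaIn_two_setOf_finite_inter C (Primrec.not.to_comp.comp₂ hf)⟩
  · exact (Set.not_infinite.1 (mt (h0 x).1 (not_not.2 hx))).inter_of_right _
  · have hfin : ({n | C n = true} ∩ {s | f x s = true}).Finite :=
      (Set.not_infinite.1 (mt (h1 x).1 (not_not.2 hxA1))).inter_of_right _
    exact (hcoh.finite_inter_true_iff x).1 hfin hxD

/-- given disjoint `Σ⁰₂` sets `A₀, A₁`, a computable `f` with
`{s : f(x,s)=i}` infinite iff `x ∉ A_i`, and an `R`-cohesive set `C` for the sequence
`R_x(s) ⇔ f(x,s)=1`, the set `D = {x : f(x,c)=1 for all but finitely many c ∈ C}` is a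
`Δ⁰₂(C)` set separating `A₀` from `A₁`. -/
theorem cohesive_separation (A0 A1 : Set ℕ)
    (hA0 : SigmaIn (fun _ => false) 2 A0) (hA1 : SigmaIn (fun _ => false) 2 A1)
    (hdisj : Disjoint A0 A1)
    (f : ℕ → ℕ → Bool) (hf : Computable₂ f)
    (h0 : ∀ x, {s | f x s = false}.Infinite ↔ x ∉ A0)
    (h1 : ∀ x, {s | f x s = true}.Infinite ↔ x ∉ A1)
    (C : ℕ → Bool)
    (hcoh : Cohesive (fun x s => f x s) {n | C n = true}) :
    let D : Set ℕ := {x | ({n | C n = true} ∩ {s | f x s = false}).Finite}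
    A0 ⊆ D ∧ D ∩ A1 = ∅ ∧ SigmaIn C 2 D ∧ SigmaIn C 2 Dᶜ :=
  cohesive_separation_general A0 A1 f hf h0 h1 C hcoh
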